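/- Let U ⊆ ℝ² be open with coordinates (ρ, p) and ρ + p ≠ 0 on U, let χ : U → ℝ, and let n, s : U → ℝ be differentiable with n ≠ 0 and ∂ps ≠ 0 on U, satisfying ∂ρn + χ·∂pn = n/(ρ+p) and ∂ρs + χ·∂ps = 0. Define the specific internal energy ε := ρ/n − 1 and the temperature Θ := −(ρ+p)·∂pn/(n²·∂ps). Then the Gibbs relation Θ ds = dε + p d(1/n) holds componentwise on U, i.e. Θ·∂ρs = ∂ρε + p·∂ρ(1/n) and Θ·∂ps = ∂pε + p·∂p(1/n); in particular n²·Θ·∂ρs = n − (ρ+p)·∂ρn, so wherever ∂ρs ≠ 0 the two temperature expressions Θ^p := −(ρ+p)∂pn/(n²∂ps) and Θ^ρ := (1/∂ρs)(1/n − (ρ+p)∂ρn/n²) coincide. -/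

import Mathlib

/-! The matter equation gives `χ ∂ₚn = n/(ρ+p) − ∂ᵨn` and the entropy equation gives
`∂ᵨs = −χ ∂ₚs`, so `Θ ∂ᵨs = (ρ+p) χ ∂ₚn / n² = (n − (ρ+p) ∂ᵨn) / n²`, which is exactly
`∂ᵨε + p ∂ᵨ(1/n)`. The `p`-component holds by the very choice of `Θ`. -/

noncomputable section

/-- Partial derivative with respect to the first coordinate (the energy density ρ). -/
def pd1 (f : ℝ × ℝ → ℝ) (x y : ℝ) : ℝ := deriv (fun t => f (t, y)) x

/-- Partial derivative with respect to the second coordinate (the pressure p). -/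
def pd2 (f : ℝ × ℝ → ℝ) (x y : ℝ) : ℝ := deriv (fun t => f (x, t)) y

section PartialDerivatives

variable {f : ℝ × ℝ → ℝ} {x y : ℝ}

theorem DifferentiableAt.hasDerivAt_pd1 (hf : DifferentiableAt ℝ f (x, y)) :
    HasDerivAt (fun t => f (t, y)) (pd1 f x y) x :=
  (hf.comp x (differentiableAt_id.prodMk (differentiableAt_const y))).hasDerivAt

theorem DifferentiableAt.hasDerivAt_pd2 (hf : DifferentiableAt ℝ f (x, y)) :
    HasDerivAt (fun t => f (x, t)) (pd2 f x y) y :=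
  (hf.comp y ((differentiableAt_const x).prodMk differentiableAt_id)).hasDerivAt

theorem pd1_one_div (hf : DifferentiableAt ℝ f (x, y)) (h0 : f (x, y) ≠ 0) :
    pd1 (fun q => 1 / f q) x y = -pd1 f x y / f (x, y) ^ 2 :=
  ((hasDerivAt_const x (1 : ℝ)).div hf.hasDerivAt_pd1 h0).deriv.trans (by ring)

theorem pd2_one_div (hf : DifferentiableAt ℝ f (x, y)) (h0 : f (x, y) ≠ 0) :
    pd2 (fun q => 1 / f q) x y = -pd2 f x y / f (x, y) ^ 2 :=
  ((hasDerivAt_const y (1 : ℝ)).div hf.hasDerivAt_pd2 h0).deriv.trans (by ring)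

theorem pd1_fst_div_sub_one (hf : DifferentiableAt ℝ f (x, y)) (h0 : f (x, y) ≠ 0) :
    pd1 (fun q => q.1 / f q - 1) x y = (f (x, y) - x * pd1 f x y) / f (x, y) ^ 2 :=
  (((hasDerivAt_id' x).div hf.hasDerivAt_pd1 h0).sub_const 1).deriv.trans (by ring)

theorem pd2_fst_div_sub_one (hf : DifferentiableAt ℝ f (x, y)) (h0 : f (x, y) ≠ 0) :
    pd2 (fun q => q.1 / f q - 1) x y = -(x * pd2 f x y) / f (x, y) ^ 2 :=
  (((hasDerivAt_const y x).div hf.hasDerivAt_pd2 h0).sub_const 1).deriv.trans (by ring)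

end PartialDerivatives

theorem temperature_mul_pd1_eq {K : Type*} [Field K] {w χ n nρ np sρ sp : K}
    (hw : w ≠ 0) (hn : n ≠ 0) (hsp : sp ≠ 0)
    (hmatter : nρ + χ * np = n / w) (hentropy : sρ + χ * sp = 0) :
    -(w * np / (n ^ 2 * sp)) * sρ = (n - w * nρ) / n ^ 2 := by
  rw [eq_div_iff hw] at hmatter
  rw [eq_neg_of_add_eq_zero_left hentropy]
  field_simp
  linear_combination hmatter

theorem gibbs_relation_from_conservation
    (U : Set (ℝ × ℝ))
    (hsum : ∀ x y : ℝ, (x, y) ∈ U → x + y ≠ 0)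
    (χ n s : ℝ × ℝ → ℝ)
    (hdn : ∀ x y : ℝ, (x, y) ∈ U → DifferentiableAt ℝ n (x, y))
    (hn0 : ∀ x y : ℝ, (x, y) ∈ U → n (x, y) ≠ 0)
    (hsp : ∀ x y : ℝ, (x, y) ∈ U → pd2 s x y ≠ 0)
    (hmatter : ∀ x y : ℝ, (x, y) ∈ U →
      pd1 n x y + χ (x, y) * pd2 n x y = n (x, y) / (x + y))
    (hentropy : ∀ x y : ℝ, (x, y) ∈ U →
      pd1 s x y + χ (x, y) * pd2 s x y = 0) :
    ∀ x y : ℝ, (x, y) ∈ U →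
      ((-((x + y) * pd2 n x y / ((n (x, y)) ^ 2 * pd2 s x y))) * pd1 s x y
          = pd1 (fun q => q.1 / n q - 1) x y + y * pd1 (fun q => 1 / n q) x y)
      ∧ ((-((x + y) * pd2 n x y / ((n (x, y)) ^ 2 * pd2 s x y))) * pd2 s x y
          = pd2 (fun q => q.1 / n q - 1) x y + y * pd2 (fun q => 1 / n q) x y)
      ∧ ((n (x, y)) ^ 2 * (-((x + y) * pd2 n x y / ((n (x, y)) ^ 2 * pd2 s x y))) * pd1 s x y
          = n (x, y) - (x + y) * pd1 n x y)
      ∧ (pd1 s x y ≠ 0 →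
          -((x + y) * pd2 n x y / ((n (x, y)) ^ 2 * pd2 s x y))
            = (1 / pd1 s x y) * (1 / n (x, y) - (x + y) * pd1 n x y / (n (x, y)) ^ 2)) := by
  intro x y hxy
  have hn := hn0 x y hxy
  have hs := hsp x y hxy
  have hdiff := hdn x y hxy
  have hΘsρ := temperature_mul_pd1_eq (hsum x y hxy) hn hs (hmatter x y hxy) (hentropy x y hxy)
  rw [pd1_fst_div_sub_one hdiff hn, pd1_one_div hdiff hn,
    pd2_fst_div_sub_one hdiff hn, pd2_one_div hdiff hn, mul_assoc, hΘsρ]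
  refine ⟨by ring, by field_simp; ring, mul_div_cancel₀ _ (pow_ne_zero 2 hn), fun hsρ => ?_⟩
  rw [← eq_div_iff hsρ] at hΘsρ
  rw [hΘsρ]
  field_simp
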